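/- Let α ∈ (0,1). The function Φ satisfies Φ(0) = 1 and the fractional ordinary differential equation D^α Φ(y) + (1/(1+α)) · y · Φ(y) = 0 for every y > 0, where D^α is the Caputo fractional derivative. -/

import Mathlib

open MeasureTheory Real Set

/-- Caputo fractional derivative of order `α` on the half-line:
`D^α u(x) = (1/Γ(1−α)) ∫₀ˣ u'(s)(x−s)^{−α} ds`. -/
noncomputable def caputo (α : ℝ) (u : ℝ → ℝ) (x : ℝ) : ℝ :=
  (1 / Real.Gamma (1 - α)) * ∫ s in (0:ℝ)..x, deriv u s * (x - s) ^ (-α)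
/-- The function `Φ(x) = Σ (−1)ⁿ bₙ (x^{1+α}/(1+α))ⁿ`, where
`bₙ = ∏_{i<n} Γ(αi+i+2)/Γ(α(i+1)+i+2)`; it equals the generalized Mittag-Leffler
function `E_{α,1+1/α,1/α}(−x^{1+α}/(1+α))`. -/
noncomputable def PhiF (α : ℝ) (x : ℝ) : ℝ :=
  ∑' n : ℕ, (-1:ℝ)^n *
    (∏ i ∈ Finset.range n, Real.Gamma (α * i + i + 2) / Real.Gamma (α * (i+1) + i + 2)) *
    (x ^ (1+α) / (1+α)) ^ n

/-!
With `t(x) = x^{1+α}/(1+α)` we have `Φ = g ∘ t` for the power series `g(t) = Σ cₙ tⁿ`,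
`cₙ = (-1)ⁿ bₙ`. Since `|c_{n+1}/cₙ| = Γ(z)/Γ(z+α)` with `z = (1+α)n+2`, and this ratio tends
to `0` by the log-convexity of `Γ`, `g` is entire and may be differentiated termwise.
The `m`-th term of `Φ'(s)(y-s)^{-α}` is a multiple of the Beta integrand
`s^{(1+α)(m+1)-1}(y-s)^{-α}`, and the recursion `b_{m+1} Γ(z+α) = b_m Γ(z)` turns its integral
into `-Γ(1-α) y/(1+α)` times the `m`-th term of `Φ(y)`. These integrals are absolutely summable,
which justifies integrating term by term.
-/

open Filter Topology FormalMultilinearSeries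

theorem integral_rpow_mul_sub_rpow {p q y : ℝ} (hp : 0 < p) (hq : 0 < q) (hy : 0 < y) :
    ∫ s in (0:ℝ)..y, s ^ (p - 1) * (y - s) ^ (q - 1) =
      y ^ (p + q - 1) * (Gamma p * Gamma q / Gamma (p + q)) := by
  have hC := Complex.betaIntegral_scaled p q hy
  have hcongr : (∫ s in (0:ℝ)..y, (s : ℂ) ^ ((p : ℂ) - 1) * ((y : ℂ) - s) ^ ((q : ℂ) - 1))
      = ∫ s in (0:ℝ)..y, ((s ^ (p - 1) * (y - s) ^ (q - 1) : ℝ) : ℂ) := by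
    refine intervalIntegral.integral_congr fun s hs => ?_
    rw [uIcc_of_le hy.le] at hs
    rw [Complex.ofReal_mul, Complex.ofReal_cpow hs.1, Complex.ofReal_cpow (sub_nonneg.2 hs.2)]
    push_cast
    ring
  have hbeta : Complex.betaIntegral p q = ((Gamma p * Gamma q / Gamma (p + q) : ℝ) : ℂ) := by
    rw [Complex.betaIntegral_eq_Gamma_mul_div _ _ (by simpa using hp) (by simpa using hq)]
    push_cast
    rw [← Complex.Gamma_ofReal, ← Complex.Gamma_ofReal, ← Complex.ofReal_add,
      ← Complex.Gamma_ofReal]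
  rw [hcongr, intervalIntegral.integral_ofReal, hbeta,
    show (p : ℂ) + q - 1 = ((p + q - 1 : ℝ) : ℂ) by push_cast; ring,
    ← Complex.ofReal_cpow hy.le, ← Complex.ofReal_mul] at hC
  exact_mod_cast hC

theorem Gamma_div_Gamma_add_le {a z : ℝ} (ha0 : 0 < a) (ha1 : a < 1) (hz : 0 < z) :
    Gamma z / Gamma (z + a) ≤ (z + a) ^ (1 - a) / z := by
  have hza : 0 < z + a := by linarith
  have hΓ : 0 < Gamma (z + a) := Gamma_pos_of_pos hza
  -- log-convexity of `Γ` between `z + a` and `z + a + 1`, evaluated at `z + 1`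
  have hconv := Gamma_mul_add_mul_le_rpow_Gamma_mul_rpow_Gamma hza (by linarith : 0 < z + a + 1)
    ha0 (sub_pos.2 ha1) (add_sub_cancel a 1)
  rw [show a * (z + a) + (1 - a) * (z + a + 1) = z + 1 by ring, Gamma_add_one hz.ne',
    Gamma_add_one hza.ne', mul_rpow hza.le hΓ.le, ← mul_assoc, mul_comm (Gamma (z + a) ^ a),
    mul_assoc, ← rpow_add hΓ, add_sub_cancel, rpow_one] at hconv
  rw [div_le_div_iff₀ hΓ hz]
  linarith

theorem tendsto_Gamma_div_Gamma_add {a : ℝ} (ha0 : 0 < a) (ha1 : a < 1) :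
    Tendsto (fun z => Gamma z / Gamma (z + a)) atTop (𝓝 0) := by
  have hlim : Tendsto (fun z : ℝ => 2 ^ (1 - a) * z ^ (-a)) atTop (𝓝 0) := by
    simpa using (tendsto_rpow_neg_atTop ha0).const_mul (2 ^ (1 - a))
  refine tendsto_of_tendsto_of_tendsto_of_le_of_le' tendsto_const_nhds hlim ?_ ?_
  · filter_upwards [eventually_gt_atTop 0] with z hz
    exact div_nonneg (Gamma_pos_of_pos hz).le (Gamma_pos_of_pos (by linarith)).le
  · filter_upwards [eventually_ge_atTop 1] with z hz
    have hz0 : 0 < z := by linarith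
    calc Gamma z / Gamma (z + a) ≤ (z + a) ^ (1 - a) / z := Gamma_div_Gamma_add_le ha0 ha1 hz0
      _ ≤ (2 * z) ^ (1 - a) / z := by gcongr; linarith
      _ = 2 ^ (1 - a) * z ^ (-a) := by
        rw [mul_rpow zero_le_two hz0.le, mul_div_assoc, ← rpow_sub_one hz0.ne']
        ring_nf

theorem summable_norm_mul_pow_of_radius_eq_top {a : ℕ → ℝ} (ha : (ofScalars ℝ a).radius = ⊤)
    {r : ℝ} (hr : 0 ≤ r) : Summable fun n => ‖a n‖ * r ^ n := by
  have h := (ofScalars ℝ a).summable_norm_mul_pow (r := ⟨r, hr⟩) (ha ▸ ENNReal.coe_lt_top)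
  simp only [ofScalars_norm] at h
  exact h

theorem hasDerivAt_tsum_mul_pow {a : ℕ → ℝ}
    (ha : (ofScalars ℝ a).radius = ⊤) (x : ℝ) :
    HasDerivAt (fun t => ∑' n, a n * t ^ n) (∑' n, (n + 1) * a (n + 1) * x ^ n) x := by
  set R := |x| + 1
  have hR : 1 ≤ R := le_add_of_nonneg_left (abs_nonneg x)
  have hx : x ∈ Metric.ball (0 : ℝ) R := by simp [R]
  have hu := summable_norm_mul_pow_of_radius_eq_top ha (r := 2 * R) (by positivity)
  have hbound : ∀ n, ∀ t ∈ Metric.ball (0 : ℝ) R,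
      ‖a n * (n * t ^ (n - 1))‖ ≤ ‖a n‖ * (2 * R) ^ n := by
    intro n t ht
    rw [mem_ball_zero_iff] at ht
    rw [norm_mul, norm_mul, norm_pow, Real.norm_natCast, mul_pow]
    refine mul_le_mul_of_nonneg_left ?_ (norm_nonneg _)
    calc (n : ℝ) * ‖t‖ ^ (n - 1) ≤ 2 ^ n * R ^ (n - 1) := by
          gcongr
          exact_mod_cast n.lt_two_pow_self.le
      _ ≤ 2 ^ n * R ^ n := by gcongr; exact n.sub_le 1
  have hsum : Summable fun n => a n * x ^ n := by
    refine (summable_norm_mul_pow_of_radius_eq_top ha (r := R) (by positivity)).of_norm_bounded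
      fun n => ?_
    rw [norm_mul, norm_pow]
    gcongr
    exact le_add_of_nonneg_right zero_le_one
  have hderiv := hasDerivAt_tsum_of_isPreconnected hu Metric.isOpen_ball
    (convex_ball (0 : ℝ) R).isPreconnected (fun n t _ => (hasDerivAt_pow n t).const_mul (a n))
    hbound hx hsum hx
  rw [(hu.of_norm_bounded (hbound · x hx)).tsum_eq_zero_add, CharP.cast_eq_zero, zero_mul,
    mul_zero, zero_add] at hderiv
  refine hderiv.congr_deriv (tsum_congr fun n => ?_)
  push_cast
  ring

noncomputable def phiCoeff (α : ℝ) (n : ℕ) : ℝ :=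
  (-1) ^ n * ∏ i ∈ Finset.range n, Gamma (α * i + i + 2) / Gamma (α * (i + 1) + i + 2)

theorem PhiF_eq_tsum (α x : ℝ) :
    PhiF α x = ∑' n, phiCoeff α n * (x ^ (1 + α) / (1 + α)) ^ n := rfl

theorem phiCoeff_succ (α : ℝ) (n : ℕ) :
    phiCoeff α (n + 1) =
      -phiCoeff α n * (Gamma ((1 + α) * n + 2) / Gamma ((1 + α) * n + 2 + α)) := by
  rw [phiCoeff, phiCoeff, Finset.prod_range_succ, pow_succ]
  ring_nf

theorem phiCoeff_ne_zero {α : ℝ} (hα : 0 ≤ α) (n : ℕ) : phiCoeff α n ≠ 0 := by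
  refine mul_ne_zero (pow_ne_zero _ (by norm_num)) (Finset.prod_ne_zero_iff.2 fun i _ => ?_)
  exact (div_pos (Gamma_pos_of_pos (by positivity)) (Gamma_pos_of_pos (by positivity))).ne'

theorem radius_ofScalars_phiCoeff {α : ℝ} (hα0 : 0 < α) (hα1 : α < 1) :
    (ofScalars ℝ (phiCoeff α)).radius = ⊤ := by
  refine ofScalars_radius_eq_top_of_tendsto ℝ _
    (Eventually.of_forall (phiCoeff_ne_zero hα0.le)) ?_
  have hz : Tendsto (fun n : ℕ => (1 + α) * n + 2) atTop atTop :=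
    tendsto_atTop_add_const_right _ 2
      (tendsto_natCast_atTop_atTop.const_mul_atTop (by linarith))
  refine ((tendsto_Gamma_div_Gamma_add hα0 hα1).comp hz).congr fun n => ?_
  have hΓ : 0 < Gamma ((1 + α) * n + 2) / Gamma ((1 + α) * n + 2 + α) :=
    div_pos (Gamma_pos_of_pos (by positivity)) (Gamma_pos_of_pos (by positivity))
  rw [Nat.succ_eq_add_one, phiCoeff_succ, norm_mul, norm_neg, Real.norm_of_nonneg hΓ.le,
    mul_div_cancel_left₀ _ (norm_ne_zero_iff.2 (phiCoeff_ne_zero hα0.le n))]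
  rfl

theorem succ_mul_phiCoeff_succ_mul_Gamma {α : ℝ} (hα : 0 ≤ α) (m : ℕ) :
    (m + 1) * phiCoeff α (m + 1) * Gamma ((1 + α) * (m + 1)) =
      -(phiCoeff α m * Gamma ((1 + α) * m + 2) / (1 + α)) := by
  have hp : 0 < (1 + α) * (m + 1) := by positivity
  have hrec := Gamma_add_one hp.ne'
  rw [show (1 + α) * (m + 1) + 1 = (1 + α) * m + 2 + α by ring] at hrec
  have hΓ : Gamma ((1 + α) * (m + 1)) ≠ 0 := (Gamma_pos_of_pos hp).ne'
  rw [phiCoeff_succ, hrec]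
  field_simp

theorem hasDerivAt_PhiF {α s : ℝ} (hα0 : 0 < α) (hα1 : α < 1) (hs : 0 < s) :
    HasDerivAt (PhiF α)
      ((∑' m : ℕ, (m + 1) * phiCoeff α (m + 1) * (s ^ (1 + α) / (1 + α)) ^ m) * s ^ α) s := by
  have hinner : HasDerivAt (fun x => x ^ (1 + α) / (1 + α)) (s ^ α) s := by
    have h := (hasDerivAt_rpow_const (p := 1 + α) (Or.inl hs.ne')).div_const (1 + α)
    rwa [add_sub_cancel_left, mul_div_cancel_left₀ _ (by linarith : (1 : ℝ) + α ≠ 0)] at h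
  exact (hasDerivAt_tsum_mul_pow (radius_ofScalars_phiCoeff hα0 hα1) _).comp s hinner

theorem integral_pow_mul_rpow_mul_sub_rpow {α y : ℝ} (hα0 : -1 < α) (hα1 : α < 1) (hy : 0 < y)
    (m : ℕ) :
    ∫ s in (0:ℝ)..y, (s ^ (1 + α) / (1 + α)) ^ m * s ^ α * (y - s) ^ (-α) =
      (y ^ (1 + α) / (1 + α)) ^ m * y *
        (Gamma ((1 + α) * (m + 1)) * Gamma (1 - α) / Gamma ((1 + α) * m + 2)) := by
  have hp : 0 < (1 + α) * (m + 1) := mul_pos (by linarith) (by positivity)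
  have hq : 0 < 1 - α := by linarith
  have hpow : ∀ s : ℝ, 0 < s → (s ^ (1 + α) / (1 + α)) ^ m * s ^ α =
      ((1 + α) ^ m)⁻¹ * s ^ ((1 + α) * (m + 1) - 1) := fun s hs => by
    rw [div_pow, ← rpow_natCast, ← rpow_mul hs.le, div_mul_eq_mul_div, ← rpow_add hs]
    ring_nf
  calc ∫ s in (0:ℝ)..y, (s ^ (1 + α) / (1 + α)) ^ m * s ^ α * (y - s) ^ (-α)
      = ∫ s in (0:ℝ)..y,
          ((1 + α) ^ m)⁻¹ * (s ^ ((1 + α) * (m + 1) - 1) * (y - s) ^ (1 - α - 1)) := by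
        refine intervalIntegral.integral_congr_ae (Eventually.of_forall fun s hs => ?_)
        rw [uIoc_of_le hy.le] at hs
        rw [hpow s hs.1, sub_sub_cancel_left]
        ring
    _ = ((1 + α) ^ m)⁻¹ * (y ^ ((1 + α) * m + 1) *
          (Gamma ((1 + α) * (m + 1)) * Gamma (1 - α) / Gamma ((1 + α) * m + 2))) := by
        rw [intervalIntegral.integral_const_mul, integral_rpow_mul_sub_rpow hp hq hy]
        ring_nf
    _ = _ := by
        rw [rpow_add hy, rpow_one, rpow_mul hy.le, rpow_natCast, div_pow]
        ring

theorem integral_tsum_mul_of_nonneg {X : Type*} [MeasurableSpace X] {μ : Measure X}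
    {k : ℕ → ℝ} {g : ℕ → X → ℝ} (hg : ∀ n, Integrable (g n) μ) (hg0 : ∀ n, 0 ≤ᵐ[μ] g n)
    (hsum : Summable fun n => ‖k n * ∫ x, g n x ∂μ‖) :
    ∫ x, ∑' n, k n * g n x ∂μ = ∑' n, k n * ∫ x, g n x ∂μ := by
  have hnorm : ∀ n, ∫ x, ‖k n * g n x‖ ∂μ = ‖k n * ∫ x, g n x ∂μ‖ := fun n => by
    rw [norm_mul, Real.norm_of_nonneg (integral_nonneg_of_ae (hg0 n))]
    simp_rw [norm_mul]
    rw [integral_const_mul]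
    exact congrArg _ (integral_congr_ae ((hg0 n).mono fun x hx => Real.norm_of_nonneg hx))
  rw [← integral_tsum_of_summable_integral_norm (fun n => (hg n).const_mul (k n))
    (by simpa only [hnorm] using hsum)]
  simp_rw [integral_const_mul]

theorem integrableOn_pow_mul_rpow_mul_sub_rpow {α y : ℝ} (hα0 : -1 < α) (hα1 : α < 1)
    (hy : 0 < y) (m : ℕ) :
    IntegrableOn (fun s => (s ^ (1 + α) / (1 + α)) ^ m * s ^ α * (y - s) ^ (-α)) (Ioc 0 y) := by
  -- a non-integrable function would have Bochner integral `0`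
  refine (intervalIntegral.intervalIntegrable_of_integral_ne_zero ?_).1
  rw [integral_pow_mul_rpow_mul_sub_rpow hα0 hα1 hy m]
  have hc : 0 < 1 + α := by linarith
  have hp : 0 < (1 + α) * (m + 1) := by positivity
  exact (mul_pos (mul_pos (pow_pos (div_pos (rpow_pos_of_pos hy _) hc) m) hy)
    (div_pos (mul_pos (Gamma_pos_of_pos hp) (Gamma_pos_of_pos (by linarith)))
      (Gamma_pos_of_pos (by positivity)))).ne'

theorem succ_mul_phiCoeff_succ_mul_integral {α y : ℝ} (hα0 : 0 < α) (hα1 : α < 1) (hy : 0 < y)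
    (m : ℕ) :
    (m + 1) * phiCoeff α (m + 1) *
        ∫ s in (0:ℝ)..y, (s ^ (1 + α) / (1 + α)) ^ m * s ^ α * (y - s) ^ (-α) =
      -(Gamma (1 - α) * y / (1 + α)) * (phiCoeff α m * (y ^ (1 + α) / (1 + α)) ^ m) := by
  have hΓ : Gamma ((1 + α) * m + 2) ≠ 0 := (Gamma_pos_of_pos (by positivity)).ne'
  calc (m + 1) * phiCoeff α (m + 1) *
        ∫ s in (0:ℝ)..y, (s ^ (1 + α) / (1 + α)) ^ m * s ^ α * (y - s) ^ (-α)
      = (y ^ (1 + α) / (1 + α)) ^ m * y * Gamma (1 - α) / Gamma ((1 + α) * m + 2) *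
          ((m + 1) * phiCoeff α (m + 1) * Gamma ((1 + α) * (m + 1))) := by
        rw [integral_pow_mul_rpow_mul_sub_rpow (by linarith) hα1 hy]
        ring
    _ = _ := by
        rw [succ_mul_phiCoeff_succ_mul_Gamma hα0.le]
        field_simp

theorem caputo_PhiF {α y : ℝ} (hα0 : 0 < α) (hα1 : α < 1) (hy : 0 < y) :
    caputo α (PhiF α) y = -(1 / (1 + α)) * y * PhiF α y := by
  set g : ℕ → ℝ → ℝ := fun m s => (s ^ (1 + α) / (1 + α)) ^ m * s ^ α * (y - s) ^ (-α) with hg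
  set k : ℕ → ℝ := fun m => (m + 1) * phiCoeff α (m + 1) with hk
  have hterm : ∀ m, k m * ∫ s in Ioc 0 y, g m s =
      -(Gamma (1 - α) * y / (1 + α)) * (phiCoeff α m * (y ^ (1 + α) / (1 + α)) ^ m) :=
    fun m => by
      rw [← intervalIntegral.integral_of_le hy.le]
      exact succ_mul_phiCoeff_succ_mul_integral hα0 hα1 hy m
  have hg0 : ∀ m, 0 ≤ᵐ[volume.restrict (Ioc 0 y)] g m := fun m =>
    ae_restrict_of_forall_mem measurableSet_Ioc fun s ⟨hs0, hsy⟩ => by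
      have := rpow_nonneg (sub_nonneg.2 hsy) (-α)
      positivity
  have hsum : Summable fun m => ‖k m * ∫ s in Ioc 0 y, g m s‖ := by
    have ht : 0 ≤ y ^ (1 + α) / (1 + α) := by positivity
    simp_rw [hterm, norm_mul, norm_pow, Real.norm_of_nonneg ht]
    exact (summable_norm_mul_pow_of_radius_eq_top (radius_ofScalars_phiCoeff hα0 hα1) ht).mul_left
      _
  calc caputo α (PhiF α) y = 1 / Gamma (1 - α) * ∫ s in Ioc 0 y, ∑' m, k m * g m s := by
        rw [caputo, intervalIntegral.integral_of_le hy.le]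
        refine congrArg _ (setIntegral_congr_fun measurableSet_Ioc fun s hs => ?_)
        rw [(hasDerivAt_PhiF hα0 hα1 hs.1).deriv, ← tsum_mul_right, ← tsum_mul_right]
        exact tsum_congr fun m => by simp only [hk, hg]; ring
    _ = 1 / Gamma (1 - α) * ∑' m, k m * ∫ s in Ioc 0 y, g m s := by
        rw [integral_tsum_mul_of_nonneg
          (integrableOn_pow_mul_rpow_mul_sub_rpow (by linarith) hα1 hy) hg0 hsum]
    _ = -(1 / (1 + α)) * y * PhiF α y := by
        have hΓ : Gamma (1 - α) ≠ 0 := (Gamma_pos_of_pos (by linarith)).ne'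
        simp_rw [hterm]
        rw [tsum_mul_left, PhiF_eq_tsum]
        field_simp

theorem PhiF_zero {α : ℝ} (hα : -1 < α) : PhiF α 0 = 1 := by
  rw [PhiF_eq_tsum, zero_rpow (by linarith), zero_div, tsum_eq_single 0 fun n hn => by simp [hn]]
  simp [phiCoeff]

/-- `Φ(0) = 1` and `Φ` solves the fractional ODE
`D^α Φ(y) + y Φ(y)/(1+α) = 0` for `y > 0`. -/
theorem Phi_solves_fractional_ode
    (α : ℝ) (hα : α ∈ Set.Ioo (0:ℝ) 1) :
    PhiF α 0 = 1 ∧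
    ∀ y > (0:ℝ), caputo α (PhiF α) y + (1/(1+α)) * y * PhiF α y = 0 := by
  refine ⟨PhiF_zero (by linarith [hα.1]), fun y hy => ?_⟩
  rw [caputo_PhiF hα.1 hα.2 hy]
  ring
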